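/- For every real p > 4, ∫₀¹ |ln t|^{p-1} · t³/(1-t²)⁴ dt = Γ(p)/(3·2^{p+1}) · [ζ(p-3) - ζ(p-1)]. -/

import Mathlib

/-!
Expand `1 / (1 - t²)⁴ = ∑ C(n+3, 3) t²ⁿ` and integrate term by term, which is legitimate because
all terms are nonnegative. The substitution `t = e⁻ˣ` turns each term into a Gamma integral,
`∫₀¹ (-log t)^(p-1) t^(2n+3) dt = Γ(p) / (2n+4)^p`, and since `C(n+3, 3) = (n+2)((n+2)² - 1) / 6`
the `n`-th term is `Γ(p) / (6·2^p) · ((n+2)^(3-p) - (n+2)^(1-p))`. Summing over `n` gives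
`ζ(p-3) - ζ(p-1)`, because the missing term `n + 2 = 1` is `1 - 1 = 0`.
-/

open Real MeasureTheory Set

section ExpNegSubstitution

variable {E : Type*} [NormedAddCommGroup E] [NormedSpace ℝ E]

lemma image_exp_neg_Ioi : (fun x : ℝ => exp (-x)) '' Ioi 0 = Ioo 0 1 := by
  ext t
  constructor
  · rintro ⟨x, hx, rfl⟩
    exact ⟨exp_pos _, exp_lt_one_iff.2 (neg_neg_of_pos hx)⟩
  · rintro ⟨ht₀, ht₁⟩
    exact ⟨-log t, neg_pos.2 (log_neg ht₀ ht₁), by simp [exp_log ht₀]⟩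

lemma hasDerivWithinAt_exp_neg (s : Set ℝ) (x : ℝ) :
    HasDerivWithinAt (fun x => exp (-x)) (-exp (-x)) s x := by
  simpa using (hasDerivAt_neg x).exp.hasDerivWithinAt

lemma integrableOn_Ioo_zero_one_iff_comp_exp_neg (g : ℝ → E) :
    IntegrableOn g (Ioo 0 1) ↔ IntegrableOn (fun x => exp (-x) • g (exp (-x))) (Ioi 0) := by
  rw [← image_exp_neg_Ioi, integrableOn_image_iff_integrableOn_abs_deriv_smul measurableSet_Ioi
    (fun x _ => hasDerivWithinAt_exp_neg _ x) (exp_injective.comp neg_injective).injOn]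
  simp only [abs_neg, abs_of_pos (exp_pos _)]

lemma integral_Ioo_zero_one_eq_integral_comp_exp_neg (g : ℝ → E) :
    ∫ t in Ioo 0 1, g t = ∫ x in Ioi 0, exp (-x) • g (exp (-x)) := by
  rw [← image_exp_neg_Ioi, integral_image_eq_integral_abs_deriv_smul measurableSet_Ioi
    (fun x _ => hasDerivWithinAt_exp_neg _ x) (exp_injective.comp neg_injective).injOn]
  simp only [abs_neg, abs_of_pos (exp_pos _)]

end ExpNegSubstitution

section LogMoment

lemma exp_neg_mul_neg_log_rpow_mul_rpow (a r x : ℝ) :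
    exp (-x) • ((-log (exp (-x))) ^ (a - 1) * exp (-x) ^ (r - 1))
      = x ^ (a - 1) * exp (-(r * x)) := by
  rw [log_exp, neg_neg, smul_eq_mul, ← exp_mul, mul_left_comm, ← exp_add]
  ring_nf

variable {a r : ℝ}

lemma integrableOn_neg_log_rpow_mul_rpow (ha : 0 < a) (hr : 0 < r) :
    IntegrableOn (fun t => (-log t) ^ (a - 1) * t ^ (r - 1)) (Ioo 0 1) := by
  rw [integrableOn_Ioo_zero_one_iff_comp_exp_neg]
  simp only [exp_neg_mul_neg_log_rpow_mul_rpow]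
  simpa using integrableOn_rpow_mul_exp_neg_mul_rpow (by linarith : -1 < a - 1) one_pos hr

lemma integral_neg_log_rpow_mul_rpow (ha : 0 < a) (hr : 0 < r) :
    ∫ t in Ioo 0 1, (-log t) ^ (a - 1) * t ^ (r - 1) = (1 / r) ^ a * Gamma a := by
  rw [integral_Ioo_zero_one_eq_integral_comp_exp_neg]
  simp only [exp_neg_mul_neg_log_rpow_mul_rpow]
  exact integral_rpow_mul_exp_neg_mul_Ioi ha hr

end LogMoment

section SeriesIntegral

variable {α : Type*} [MeasurableSpace α] {μ : Measure α}

lemma hasSum_integral_of_nonneg_of_summable {f : ℕ → α → ℝ} {F : α → ℝ}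
    (hf_int : ∀ n, Integrable (f n) μ) (hf_nonneg : ∀ n, 0 ≤ᵐ[μ] f n)
    (hF : ∀ᵐ x ∂μ, HasSum (fun n => f n x) (F x))
    (hsum : Summable fun n => ∫ x, f n x ∂μ) :
    HasSum (fun n => ∫ x, f n x ∂μ) (∫ x, F x ∂μ) := by
  have hnorm : (fun n => ∫ x, ‖f n x‖ ∂μ) = fun n => ∫ x, f n x ∂μ :=
    funext fun n => integral_congr_ae <| (hf_nonneg n).mono fun x hx => norm_of_nonneg hx
  have h := hasSum_integral_of_summable_integral_norm hf_int (hnorm ▸ hsum)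
  rwa [integral_congr_ae (hF.mono fun x hx => hx.tsum_eq)] at h

end SeriesIntegral

lemma hasSum_one_div_nat_add_two_cpow_sub {s w : ℂ} (hs : 1 < s.re) (hw : 1 < w.re) :
    HasSum (fun n : ℕ => 1 / ((n : ℂ) + 2) ^ s - 1 / ((n : ℂ) + 2) ^ w)
      (riemannZeta s - riemannZeta w) := by
  have hζ : ∀ {u : ℂ}, 1 < u.re → HasSum (fun n : ℕ => 1 / ((n : ℂ) + 1) ^ u) (riemannZeta u) :=
    fun {u} hu => by
      rw [zeta_eq_tsum_one_div_nat_add_one_cpow hu]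
      exact_mod_cast ((summable_nat_add_iff 1).2 (Complex.summable_one_div_nat_cpow.2 hu)).hasSum
  have h := (hζ hs).sub (hζ hw)
  rw [← hasSum_nat_add_iff' 1] at h
  simpa [add_assoc, one_add_one_eq_two] using h

lemma cast_choose_add_three_three (n : ℕ) :
    ((n + 3).choose 3 : ℝ) = (n + 1) * (n + 2) * (n + 3) / 6 := by
  rw [Nat.cast_choose ℝ (Nat.le_add_left 3 n), Nat.add_sub_cancel]
  push_cast [Nat.factorial_succ]
  field_simp
  ring

lemma cast_choose_add_three_three_mul_rpow (p : ℝ) (n : ℕ) :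
    ((n + 3).choose 3 : ℝ) * (1 / (2 * n + 4)) ^ p
      = 1 / (6 * 2 ^ p) * (1 / ((n : ℝ) + 2) ^ (p - 3) - 1 / ((n : ℝ) + 2) ^ (p - 1)) := by
  have hm : (0 : ℝ) < n + 2 := by positivity
  rw [cast_choose_add_three_three, show (2 * n + 4 : ℝ) = 2 * (n + 2) by ring,
    div_rpow zero_le_one (by positivity), one_rpow, mul_rpow zero_le_two hm.le, rpow_sub hm,
    rpow_sub hm, rpow_one, show (3 : ℝ) = (3 : ℕ) by norm_num, rpow_natCast]
  field_simp
  ring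

section SeriesTerm

variable {p : ℝ}

noncomputable def seriesTerm (p : ℝ) (n : ℕ) (t : ℝ) : ℝ :=
  (n + 3).choose 3 * ((-log t) ^ (p - 1) * t ^ (2 * n + 3))

lemma seriesTerm_nonneg (p : ℝ) (n : ℕ) {t : ℝ} (ht : t ∈ Ioo 0 1) : 0 ≤ seriesTerm p n t := by
  have hlog : 0 ≤ -log t := neg_nonneg.2 (log_nonpos ht.1.le ht.2.le)
  exact mul_nonneg (Nat.cast_nonneg _) (mul_nonneg (rpow_nonneg hlog _) (pow_nonneg ht.1.le _))

lemma hasSum_seriesTerm (p : ℝ) {t : ℝ} (ht : t ∈ Ioo 0 1) :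
    HasSum (fun n => seriesTerm p n t) (|log t| ^ (p - 1) * t ^ 3 / (1 - t ^ 2) ^ 4) := by
  have ht2 : ‖t ^ 2‖ < 1 := by
    rw [norm_pow, norm_of_nonneg ht.1.le]
    exact pow_lt_one₀ ht.1.le ht.2 two_ne_zero
  have h := (hasSum_choose_mul_geometric_of_norm_lt_one 3 ht2).mul_left ((-log t) ^ (p - 1) * t ^ 3)
  rw [mul_one_div] at h
  rw [abs_of_neg (log_neg ht.1 ht.2)]
  exact h.congr_fun fun n => by rw [seriesTerm]; ring

lemma neg_log_rpow_mul_pow_eq_rpow (p : ℝ) (n : ℕ) (t : ℝ) :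
    (-log t) ^ (p - 1) * t ^ (2 * n + 3) = (-log t) ^ (p - 1) * t ^ ((2 * n + 4 : ℝ) - 1) := by
  rw [show (2 * n + 4 : ℝ) - 1 = (2 * n + 3 : ℕ) by push_cast; ring, rpow_natCast]

lemma integrableOn_seriesTerm (hp : 0 < p) (n : ℕ) : IntegrableOn (seriesTerm p n) (Ioo 0 1) := by
  unfold seriesTerm
  simp only [neg_log_rpow_mul_pow_eq_rpow]
  exact (integrableOn_neg_log_rpow_mul_rpow hp (by positivity)).const_mul _

lemma integral_seriesTerm (hp : 0 < p) (n : ℕ) :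
    ∫ t in Ioo 0 1, seriesTerm p n t
      = Gamma p / (6 * 2 ^ p) * (1 / ((n : ℝ) + 2) ^ (p - 3) - 1 / ((n : ℝ) + 2) ^ (p - 1)) := by
  simp only [seriesTerm, neg_log_rpow_mul_pow_eq_rpow]
  rw [integral_const_mul, integral_neg_log_rpow_mul_rpow hp (by positivity), ← mul_assoc,
    cast_choose_add_three_three_mul_rpow]
  ring

lemma hasSum_integral_seriesTerm (hp : 4 < p) :
    HasSum (fun n => ((∫ t in Ioo 0 1, seriesTerm p n t : ℝ) : ℂ))
      ((Gamma p / (6 * 2 ^ p) : ℝ) * (riemannZeta (p - 3) - riemannZeta (p - 1))) := by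
  have hζ := hasSum_one_div_nat_add_two_cpow_sub (s := p - 3) (w := p - 1)
    (by rw [Complex.sub_re, Complex.ofReal_re, Complex.re_ofNat]; linarith)
    (by rw [Complex.sub_re, Complex.ofReal_re, Complex.one_re]; linarith)
  refine (hζ.mul_left _).congr_fun fun n => ?_
  have hn : (0 : ℝ) ≤ n + 2 := by positivity
  rw [integral_seriesTerm (by linarith)]
  simp [Complex.ofReal_cpow hn]

end SeriesTerm

/-- For real `p > 4`, `∫₀¹ |ln t|^(p-1) t³/(1-t²)⁴ dt = Γ(p)/(3·2^(p+1)) (ζ(p-3) - ζ(p-1))`. -/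
theorem stmt6 (p : ℝ) (hp : 4 < p) :
    ((∫ t in Set.Ioo (0 : ℝ) 1, |Real.log t| ^ (p - 1) * t ^ 3 / (1 - t ^ 2) ^ 4 : ℝ) : ℂ)
    = (Real.Gamma p / (3 * 2 ^ (p + 1)) : ℝ)
      * (riemannZeta ((p : ℂ) - 3) - riemannZeta ((p : ℂ) - 1)) := by
  have hζ := hasSum_integral_seriesTerm hp
  have hI := hasSum_integral_of_nonneg_of_summable
    (integrableOn_seriesTerm (by linarith))
    (fun n => ae_restrict_of_forall_mem measurableSet_Ioo fun t => seriesTerm_nonneg p n)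
    (ae_restrict_of_forall_mem measurableSet_Ioo fun t => hasSum_seriesTerm p)
    (Complex.summable_ofReal.1 hζ.summable)
  rw [show (3 : ℝ) * 2 ^ (p + 1) = 6 * 2 ^ p by rw [rpow_add_one two_ne_zero]; ring]
  exact (Complex.hasSum_ofReal.2 hI).unique hζ
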